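/- Let N be a positive integer, 𝒩 = {2k - N + 1 : k = 0, ..., N-1}, and let A₁, A₂ ⊆ 𝒩 be disjoint subsets with |A₁| = m, |A₂| = n. Then 2·π(𝒩 \ (A₁ ∪ A₂), A₂) - n(N - m - n) - mn + 2·π(A₁, A₂) = - Σ_{a ∈ A₂} a, where π(B₁,B₂) = #{(b₁,b₂) ∈ B₁ × B₂ : b₁ > b₂}. -/
import Mathlib

open Finset

/-- π(A,B) = #{(a,b) ∈ A × B : a > b}. -/
def piCount (A B : Finset ℤ) : ℕ := ((A ×ˢ B).filter (fun p => p.2 < p.1)).card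

/-- The set 𝒩 = {2k - N + 1 : k = 0, 1, ..., N-1} ⊆ ℤ. -/
def calN (N : ℕ) : Finset ℤ := (Finset.range N).image (fun k : ℕ => 2 * (k : ℤ) - N + 1)

lemma piCount_eq_sum (A B : Finset ℤ) :
    (piCount A B : ℤ) = ∑ a ∈ A, ∑ b ∈ B, if b < a then 1 else 0 := by
  unfold piCount
  rw [card_filter, ← Finset.sum_product']
  push_cast
  rfl

lemma piCount_eq_sum' (A B : Finset ℤ) :
    (piCount A B : ℤ) = ∑ b ∈ B, ((A.filter (fun a => b < a)).card : ℤ) := by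
  rw [piCount_eq_sum, Finset.sum_comm]
  refine Finset.sum_congr rfl fun b _ => ?_
  rw [card_filter]
  push_cast
  rfl

lemma piCount_union (A B C : Finset ℤ) (h : Disjoint A B) :
    (piCount (A ∪ B) C : ℤ) = piCount A C + piCount B C := by
  simp [piCount_eq_sum, Finset.sum_union h]

lemma piCount_self (A : Finset ℤ) :
    2 * (piCount A A : ℤ) = A.card * (A.card - 1) := by
  have hswap : (piCount A A : ℤ) = ∑ a ∈ A, ∑ b ∈ A, if a < b then (1:ℤ) else 0 := by
    rw [piCount_eq_sum]; exact Finset.sum_comm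
  have key : 2 * (piCount A A : ℤ)
      = ∑ a ∈ A, ∑ b ∈ A, ((if b < a then (1:ℤ) else 0) + (if a < b then 1 else 0)) := by
    rw [two_mul]
    nth_rewrite 1 [piCount_eq_sum]
    rw [hswap, ← Finset.sum_add_distrib]
    exact Finset.sum_congr rfl fun a _ => (Finset.sum_add_distrib).symm
  rw [key]
  have h2 : ∀ a ∈ A, (∑ b ∈ A, ((if b < a then (1:ℤ) else 0) + (if a < b then 1 else 0)))
      = A.card - 1 := by
    intro a ha
    have heq : ∀ b : ℤ, ((if b < a then (1:ℤ) else 0) + (if a < b then 1 else 0))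
        = 1 - (if a = b then 1 else 0) := by
      intro b; split_ifs <;> omega
    simp only [heq, Finset.sum_sub_distrib, Finset.sum_const, nsmul_eq_mul, mul_one,
      Finset.sum_ite_eq, ha, if_pos]
  rw [Finset.sum_congr rfl h2, Finset.sum_const, nsmul_eq_mul]

lemma card_calN_filter {N : ℕ} {b : ℤ} (hb : b ∈ calN N) :
    2 * (((calN N).filter (fun a => b < a)).card : ℤ) = (N : ℤ) - 1 - b := by
  simp only [calN, mem_image, mem_range] at hb
  obtain ⟨k, hk, rfl⟩ := hb
  have hinj : Function.Injective (fun k : ℕ => 2 * (k : ℤ) - N + 1) := by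
    intro x y hxy; simp at hxy; exact_mod_cast hxy
  have himg : (calN N).filter (fun a => (2 * (k:ℤ) - N + 1) < a)
      = (Finset.Ico (k+1) N).image (fun j : ℕ => 2 * (j : ℤ) - N + 1) := by
    ext x
    simp only [calN, Finset.mem_filter, Finset.mem_image, Finset.mem_range, Finset.mem_Ico]
    constructor
    · rintro ⟨⟨j, hj, rfl⟩, hlt⟩
      refine ⟨j, ⟨?_, hj⟩, rfl⟩
      have : (k : ℤ) < j := by omega
      omega
    · rintro ⟨j, ⟨hj1, hj2⟩, rfl⟩
      refine ⟨⟨j, hj2, rfl⟩, ?_⟩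
      have : (k : ℤ) < j := by exact_mod_cast hj1
      omega
  rw [himg, Finset.card_image_of_injective _ hinj, Nat.card_Ico]
  have hk1 : k + 1 ≤ N := hk
  push_cast [hk1]
  ring

lemma two_piCount_calN {N : ℕ} (B : Finset ℤ) (hB : B ⊆ calN N) :
    2 * (piCount (calN N) B : ℤ) = B.card * ((N : ℤ) - 1) - B.sum id := by
  rw [piCount_eq_sum', Finset.mul_sum,
    Finset.sum_congr rfl (fun b hb => card_calN_filter (hB hb)),
    Finset.sum_sub_distrib, Finset.sum_const, nsmul_eq_mul]
  simp [id]

theorem weight_change_identity (N : ℕ) (hN : 0 < N) (A₁ A₂ : Finset ℤ)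
    (h₁ : A₁ ⊆ calN N) (h₂ : A₂ ⊆ calN N) (hd : Disjoint A₁ A₂) :
    2 * (piCount ((calN N) \ (A₁ ∪ A₂)) A₂ : ℤ)
      - (A₂.card : ℤ) * ((N : ℤ) - A₁.card - A₂.card)
      - (A₁.card : ℤ) * A₂.card
      + 2 * (piCount A₁ A₂ : ℤ)
    = -(A₂.sum id) := by
  have hsub : A₁ ∪ A₂ ⊆ calN N := Finset.union_subset h₁ h₂
  have hsplit : calN N = (calN N \ (A₁ ∪ A₂)) ∪ (A₁ ∪ A₂) :=
    (Finset.sdiff_union_of_subset hsub).symm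
  have hdisj : Disjoint (calN N \ (A₁ ∪ A₂)) (A₁ ∪ A₂) := Finset.sdiff_disjoint
  have key : (piCount (calN N) A₂ : ℤ)
      = piCount (calN N \ (A₁ ∪ A₂)) A₂ + piCount A₁ A₂ + piCount A₂ A₂ := by
    conv_lhs => rw [hsplit]
    rw [piCount_union _ _ _ hdisj, piCount_union _ _ _ hd]
    ring
  have h1 := two_piCount_calN A₂ h₂
  have h2 := piCount_self A₂
  rw [key] at h1
  linarith
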